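/- Gumbel perturb-and-sort samples from Plackett–Luce: if g_1,…,g_n are i.i.d. standard Gumbel and θ ∈ ℝ^n, then the random permutation π obtained by sorting the perturbed scores s_i = θ_i + g_i in strictly decreasing order (which is almost surely well-defined) satisfies P(π = σ) = ∏_{r=1}^n exp(θ_{σ(r)}) / ∑_{j=r}^n exp(θ_{σ(j)}) for every permutation σ. -/

import Mathlib

/-!
The perturbed score `θ i + g i` is Gumbel with weight `w i = exp (θ i)`, i.e. has CDF
`F_w t = exp (-w e^{-t})`, and these CDFs multiply as `F_w F_v = F_{w+v}`. Hence
`∫_s F_v dμ_w = w / (w + v) · μ_{w+v}(s)`: the event that one score exceeds a Gumbel of weight `v`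
has probability `w / (w + v)`, and the larger of the two is again Gumbel, of weight `w + v`.
Conditioning on the top score and inducting on `n`, the probability that the scores are
decreasing with top score in `s` is `PL(w) · μ_{∑ w}(s)`; take `s = univ`.
-/

open MeasureTheory ProbabilityTheory

/-- Plackett-Luce probability of the ordering σ given logits θ. -/
noncomputable def PL {n : ℕ} (θ : Fin n → ℝ) (σ : Equiv.Perm (Fin n)) : ℝ :=
  ∏ r : Fin n, Real.exp (θ (σ r)) / ∑ j ∈ Finset.Ici r, Real.exp (θ (σ j))

open Set Filter Topology
open scoped ENNReal

noncomputable section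

/-- CDF of the Gumbel law with location `log w`. -/
def gumbelCDF (w t : ℝ) : ℝ := Real.exp (-(w * Real.exp (-t)))

def gumbelPDF (w t : ℝ) : ℝ := w * Real.exp (-t) * gumbelCDF w t

def gumbelMeasure (w : ℝ) : Measure ℝ :=
  volume.withDensity fun t => ENNReal.ofReal (gumbelPDF w t)

lemma gumbelCDF_add (w v t : ℝ) : gumbelCDF (w + v) t = gumbelCDF w t * gumbelCDF v t := by
  simp only [gumbelCDF, ← Real.exp_add]
  ring_nf

@[fun_prop]
lemma continuous_gumbelCDF (w : ℝ) : Continuous (gumbelCDF w) := by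
  unfold gumbelCDF; fun_prop

@[fun_prop]
lemma continuous_gumbelPDF (w : ℝ) : Continuous (gumbelPDF w) := by
  unfold gumbelPDF; fun_prop

lemma gumbelPDF_nonneg {w : ℝ} (hw : 0 ≤ w) (t : ℝ) : 0 ≤ gumbelPDF w t := by
  unfold gumbelPDF gumbelCDF; positivity

lemma hasDerivAt_gumbelCDF (w t : ℝ) : HasDerivAt (gumbelCDF w) (gumbelPDF w t) t := by
  show HasDerivAt (fun t => Real.exp (-(w * Real.exp (-t)))) _ t
  convert (((hasDerivAt_neg t).exp.const_mul w).fun_neg).exp using 1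
  rw [gumbelPDF, gumbelCDF]
  ring

lemma tendsto_gumbelCDF_atBot {w : ℝ} (hw : 0 < w) : Tendsto (gumbelCDF w) atBot (𝓝 0) :=
  Real.tendsto_exp_atBot.comp <| tendsto_neg_atTop_atBot.comp <|
    (Real.tendsto_exp_atTop.comp tendsto_neg_atBot_atTop).const_mul_atTop hw

lemma tendsto_gumbelCDF_atTop (w : ℝ) : Tendsto (gumbelCDF w) atTop (𝓝 1) := by
  unfold gumbelCDF
  have h : Tendsto (fun t => -(w * Real.exp (-t))) atTop (𝓝 0) := by
    simpa using ((Real.tendsto_exp_atBot.comp tendsto_neg_atTop_atBot).const_mul w).neg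
  simpa [Function.comp_def] using (Real.continuous_exp.tendsto 0).comp h

lemma gumbelMeasure_Ioc {w : ℝ} (hw : 0 ≤ w) {a b : ℝ} (hab : a ≤ b) :
    gumbelMeasure w (Ioc a b) = ENNReal.ofReal (gumbelCDF w b - gumbelCDF w a) := by
  rw [gumbelMeasure, withDensity_apply _ measurableSet_Ioc,
    ← ofReal_integral_eq_lintegral_ofReal (continuous_gumbelPDF w).integrableOn_Ioc
      (.of_forall fun t => gumbelPDF_nonneg hw t),
    ← intervalIntegral.integral_of_le hab,
    intervalIntegral.integral_eq_sub_of_hasDerivAt (fun t _ => hasDerivAt_gumbelCDF w t)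
      ((continuous_gumbelPDF w).intervalIntegrable a b)]

lemma gumbelMeasure_Iic {w : ℝ} (hw : 0 < w) (b : ℝ) :
    gumbelMeasure w (Iic b) = ENNReal.ofReal (gumbelCDF w b) := by
  refine tendsto_nhds_unique (tendsto_measure_Ioc_atBot _ b) ?_
  have h := ENNReal.tendsto_ofReal ((tendsto_gumbelCDF_atBot hw).const_sub (gumbelCDF w b))
  rw [sub_zero] at h
  refine h.congr' ?_
  filter_upwards [eventually_le_atBot b] with a hab
  exact (gumbelMeasure_Ioc hw.le hab).symm

lemma isProbabilityMeasure_gumbelMeasure {w : ℝ} (hw : 0 < w) :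
    IsProbabilityMeasure (gumbelMeasure w) := by
  refine ⟨tendsto_nhds_unique (tendsto_measure_Iic_atTop _) ?_⟩
  simp_rw [gumbelMeasure_Iic hw]
  simpa using ENNReal.tendsto_ofReal (tendsto_gumbelCDF_atTop w)

instance (w : ℝ) : NullSingletonClass (gumbelMeasure w) :=
  ⟨fun t => withDensity_absolutelyContinuous _ _ (measure_singleton t)⟩

lemma gumbelMeasure_Iio {w : ℝ} (hw : 0 < w) (b : ℝ) :
    gumbelMeasure w (Iio b) = ENNReal.ofReal (gumbelCDF w b) := by
  rw [measure_congr Iio_ae_eq_Iic, gumbelMeasure_Iic hw]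

lemma setLIntegral_gumbelCDF_gumbelMeasure {w v : ℝ} (hw : 0 < w) (hv : 0 ≤ v) {s : Set ℝ}
    (hs : MeasurableSet s) :
    ∫⁻ t in s, ENNReal.ofReal (gumbelCDF v t) ∂gumbelMeasure w
      = ENNReal.ofReal (w / (w + v)) * gumbelMeasure (w + v) s := by
  have hpdf (t : ℝ) : gumbelPDF w t * gumbelCDF v t = w / (w + v) * gumbelPDF (w + v) t := by
    rw [gumbelPDF, gumbelPDF, gumbelCDF_add]
    field_simp
  rw [gumbelMeasure, setLIntegral_withDensity_eq_setLIntegral_mul _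
      (continuous_gumbelPDF w).measurable.ennreal_ofReal
      (continuous_gumbelCDF v).measurable.ennreal_ofReal hs, gumbelMeasure,
    withDensity_apply _ hs, ← lintegral_const_mul' _ _ ENNReal.ofReal_ne_top]
  refine lintegral_congr fun t => ?_
  rw [Pi.mul_apply, ← ENNReal.ofReal_mul (gumbelPDF_nonneg hw.le t), hpdf,
    ENNReal.ofReal_mul (by positivity)]

lemma measurableSet_setOf_strictAnti {ι : Type*} [Countable ι] [Preorder ι] :
    MeasurableSet {x : ι → ℝ | StrictAnti x} := by
  simp only [StrictAnti, ofPred_forall]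
  exact .iInter fun i => .iInter fun j => .iInter fun _ =>
    measurableSet_lt (measurable_pi_apply j) (measurable_pi_apply i)

lemma pi_setOf_strictAnti_head_mem {n : ℕ} (μ : Fin (n + 2) → Measure ℝ)
    [∀ i, SigmaFinite (μ i)] {s : Set ℝ} (hs : MeasurableSet s) :
    Measure.pi μ {x | StrictAnti x ∧ x 0 ∈ s}
      = ∫⁻ a in s, Measure.pi (fun i : Fin (n + 1) => μ i.succ)
          {y | StrictAnti y ∧ y 0 ∈ Iio a} ∂μ 0 := by
  set T : Set (ℝ × (Fin (n + 1) → ℝ)) := {p | p.1 ∈ s ∧ StrictAnti p.2 ∧ p.2 0 < p.1}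
  have hT : MeasurableSet T :=
    (measurable_fst hs).inter <| (measurable_snd measurableSet_setOf_strictAnti).inter <|
      measurableSet_lt ((measurable_pi_apply 0).comp measurable_snd) measurable_fst
  have hpre : {x | StrictAnti x ∧ x 0 ∈ s}
      = MeasurableEquiv.piFinSuccAbove (fun _ => ℝ) 0 ⁻¹' T := by
    ext x
    have hx : StrictAnti x ↔ Fin.tail x 0 < x 0 ∧ StrictAnti (Fin.tail x) := by
      simpa only [Matrix.vecCons, Fin.cons_self_tail] using
        strictAnti_vecCons (a := x 0) (f := Fin.tail x)
    simp only [mem_ofPred_eq, hx, MeasurableEquiv.piFinSuccAbove_apply,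
      Fin.insertNthEquiv_zero, preimage_ofPred_eq, Fin.consEquiv_symm_apply, T]
    tauto
  rw [hpre, (measurePreserving_piFinSuccAbove μ 0).measure_preimage hT.nullMeasurableSet,
    Measure.prod_apply hT, ← lintegral_indicator hs]
  congr 1 with a
  by_cases ha : a ∈ s <;> simp [ha, T]

def plackettLuce {n : ℕ} (w : Fin n → ℝ) : ℝ := ∏ r, w r / ∑ j ∈ Finset.Ici r, w j

lemma plackettLuce_succ {n : ℕ} (w : Fin (n + 1) → ℝ) :
    plackettLuce w = w 0 / (∑ i, w i) * plackettLuce (fun i : Fin n => w i.succ) := by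
  rw [plackettLuce, plackettLuce, Fin.prod_univ_succ, ← bot_eq_zero, Finset.Ici_bot]
  congr 1
  refine Finset.prod_congr rfl fun r _ => ?_
  rw [← Fin.map_succEmb_Ici, Finset.sum_map]
  rfl

theorem pi_gumbelMeasure_setOf_strictAnti_head_mem {n : ℕ} (w : Fin (n + 1) → ℝ)
    (hw : ∀ i, 0 < w i) {s : Set ℝ} (hs : MeasurableSet s) :
    Measure.pi (fun i => gumbelMeasure (w i)) {x | StrictAnti x ∧ x 0 ∈ s}
      = ENNReal.ofReal (plackettLuce w) * gumbelMeasure (∑ i, w i) s := by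
  induction n generalizing s with
  | zero =>
    have := fun i => isProbabilityMeasure_gumbelMeasure (hw i)
    have hset : {x : Fin 1 → ℝ | StrictAnti x ∧ x 0 ∈ s} = Function.eval 0 ⁻¹' s := by
      ext x; simp [Subsingleton.strictAnti x]
    have hpl : plackettLuce w = 1 := by simp [plackettLuce, (hw 0).ne']
    rw [hset, hpl, ENNReal.ofReal_one, one_mul, Fin.sum_univ_one]
    exact (measurePreserving_eval _ 0).measure_preimage hs.nullMeasurableSet
  | succ n ih =>
    set v := ∑ i : Fin (n + 1), w i.succ
    have hv : 0 < v := Finset.sum_pos (fun i _ => hw _) Finset.univ_nonempty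
    calc Measure.pi (fun i => gumbelMeasure (w i)) {x | StrictAnti x ∧ x 0 ∈ s}
        = ∫⁻ a in s, ENNReal.ofReal (plackettLuce fun i : Fin (n + 1) => w i.succ)
            * ENNReal.ofReal (gumbelCDF v a) ∂gumbelMeasure (w 0) := by
          have := fun i => isProbabilityMeasure_gumbelMeasure (hw i)
          rw [pi_setOf_strictAnti_head_mem _ hs]
          refine lintegral_congr fun a => ?_
          rw [ih _ (fun i => hw _) measurableSet_Iio, gumbelMeasure_Iio hv]
      _ = ENNReal.ofReal (plackettLuce w) * gumbelMeasure (∑ i, w i) s := by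
          rw [lintegral_const_mul' _ _ ENNReal.ofReal_ne_top,
            setLIntegral_gumbelCDF_gumbelMeasure (hw 0) hv.le hs, plackettLuce_succ w,
            Fin.sum_univ_succ w, ENNReal.ofReal_mul (div_nonneg (hw 0).le (by linarith [hw 0]))]
          ring

theorem pi_gumbelMeasure_setOf_strictAnti {n : ℕ} (w : Fin n → ℝ) (hw : ∀ i, 0 < w i) :
    Measure.pi (fun i => gumbelMeasure (w i)) {x | StrictAnti x}
      = ENNReal.ofReal (plackettLuce w) := by
  have := fun i => isProbabilityMeasure_gumbelMeasure (hw i)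
  cases n with
  | zero => simp [Subsingleton.strictAnti, plackettLuce]
  | succ n =>
    have := isProbabilityMeasure_gumbelMeasure
      (Finset.sum_pos (fun i _ => hw i) Finset.univ_nonempty)
    simpa using pi_gumbelMeasure_setOf_strictAnti_head_mem w hw MeasurableSet.univ

lemma map_const_add_eq_gumbelMeasure {Ω : Type*} [MeasurableSpace Ω] {μ : Measure Ω}
    [IsFiniteMeasure μ] {g : Ω → ℝ} (hg : Measurable g)
    (hcdf : ∀ t, μ {ω | g ω ≤ t} = ENNReal.ofReal (Real.exp (-Real.exp (-t)))) (θ : ℝ) :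
    μ.map (fun ω => θ + g ω) = gumbelMeasure (Real.exp θ) := by
  refine Measure.ext_of_Iic _ _ fun t => ?_
  have hpre : (fun ω => θ + g ω) ⁻¹' Iic t = {ω | g ω ≤ t - θ} := by
    ext ω; simp [le_sub_iff_add_le']
  rw [Measure.map_apply (hg.const_add θ) measurableSet_Iic, hpre, hcdf,
    gumbelMeasure_Iic (Real.exp_pos θ), gumbelCDF, ← Real.exp_add]
  ring_nf

end

/-- Gumbel perturb-and-sort samples from Plackett-Luce: with i.i.d. standard
Gumbel perturbations, the probability that the perturbed scores θ_i + g_i are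
strictly decreasing along a permutation σ equals PL(σ | θ). -/
theorem gumbel_perturb_and_sort {Ω : Type*} [MeasurableSpace Ω]
    (μ : Measure Ω) [IsProbabilityMeasure μ]
    (n : ℕ) (θ : Fin n → ℝ) (g : Fin n → Ω → ℝ)
    (hmeas : ∀ i, Measurable (g i))
    (hindep : iIndepFun g μ)
    (hgumbel : ∀ i t, μ {ω | g i ω ≤ t} = ENNReal.ofReal (Real.exp (-Real.exp (-t))))
    (σ : Equiv.Perm (Fin n)) :
    μ {ω | ∀ r s : Fin n, r < s → θ (σ s) + g (σ s) ω < θ (σ r) + g (σ r) ω}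
      = ENNReal.ofReal (PL θ σ) := by
  set X : Fin n → Ω → ℝ := fun i ω => θ (σ i) + g (σ i) ω
  have hX : ∀ i, Measurable (X i) := fun i => (hmeas _).const_add _
  have hlaw : μ.map (fun ω i => X i ω)
      = Measure.pi fun i => gumbelMeasure (Real.exp (θ (σ i))) := by
    have hXindep : iIndepFun X μ :=
      (hindep.precomp σ.injective).comp _ fun i => measurable_const_add _
    rw [(iIndepFun_iff_map_fun_eq_pi_map fun i => (hX i).aemeasurable).mp hXindep]
    simp_rw [X, map_const_add_eq_gumbelMeasure (hmeas _) (hgumbel _)]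
  change μ ((fun ω i => X i ω) ⁻¹' {x | StrictAnti x}) = _
  rw [← Measure.map_apply (measurable_pi_lambda _ hX) measurableSet_setOf_strictAnti, hlaw,
    pi_gumbelMeasure_setOf_strictAnti _ fun i => Real.exp_pos _]
  rfl
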